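/- arXiv:math/0603054 — 5 statements merged into one kernel-verified Lean document; each statement's English description precedes it below -/
import Mathlib

section
/- Let p be an odd prime. The polynomial f(x) = -[((x-1)^{p-2} + 1)^{p-2} - 1]^{p-2} with coefficients in ℤ/pℤ represents the transposition (0 1) on ℤ/pℤ; that is, f(0) = 1, f(1) = 0, and f(a) = a for every a ∈ ℤ/pℤ with a ≠ 0 and a ≠ 1. -/
open Polynomial

lemma pow_sub_two_inv {p : ℕ} (hp : p.Prime) (x : ZMod p) (hx : x ≠ 0) :
    x ^ (p - 2) = x⁻¹ := by
  haveI : Fact p.Prime := ⟨hp⟩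
  have h2 : 2 ≤ p := hp.two_le
  have hmul : x * x ^ (p - 2) = 1 := by
    rw [← pow_succ']
    have : p - 2 + 1 = p - 1 := by omega
    rw [this, ZMod.pow_card_sub_one_eq_one hx]
  field_simp
  linear_combination hmul

/-- For an odd prime `p`, the polynomial
`f(x) = -[((x-1)^(p-2) + 1)^(p-2) - 1]^(p-2)`
represents the transposition `(0 1)` on `ℤ/pℤ`. -/
theorem stmt_1 (p : ℕ) (hp : p.Prime) (hodd : Odd p)
    (f : Polynomial (ZMod p))
    (hf : f = -((((X : Polynomial (ZMod p)) - 1) ^ (p - 2) + 1) ^ (p - 2) - 1) ^ (p - 2)) :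
    f.eval 0 = 1 ∧ f.eval 1 = 0 ∧ ∀ a : ZMod p, a ≠ 0 → a ≠ 1 → f.eval a = a := by
  haveI : Fact p.Prime := ⟨hp⟩
  have h3 : 3 ≤ p := by
    have h2 := hp.two_le
    have hne : p ≠ 2 := by rintro rfl; exact absurd hodd (by decide)
    omega
  have hodd2 : Odd (p - 2) := by
    obtain ⟨k, hk⟩ := hodd; exact ⟨k - 1, by omega⟩
  have hpos : 1 ≤ p - 2 := by omega
  have hz : (0 : ZMod p) ^ (p - 2) = 0 := zero_pow (by omega)
  subst hf
  refine ⟨?_, ?_, ?_⟩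
  · simp only [eval_neg, eval_pow, eval_sub, eval_add, eval_X, eval_one]
    rw [zero_sub, hodd2.neg_one_pow, neg_add_cancel, hz, zero_sub, hodd2.neg_one_pow]
    ring
  · simp only [eval_neg, eval_pow, eval_sub, eval_add, eval_X, eval_one]
    rw [sub_self, hz, zero_add, one_pow, sub_self, hz, neg_zero]
  · intro a ha0 ha1
    simp only [eval_neg, eval_pow, eval_sub, eval_add, eval_X, eval_one]
    have hA : a - 1 ≠ 0 := sub_ne_zero.mpr ha1
    rw [pow_sub_two_inv hp _ hA]
    have h1 : (a - 1)⁻¹ + 1 = a * (a - 1)⁻¹ := by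
      field_simp
      ring
    rw [h1]
    have h2 : a * (a - 1)⁻¹ ≠ 0 := by
      simp [ha0, inv_ne_zero hA]
    rw [pow_sub_two_inv hp _ h2, mul_inv, inv_inv]
    have h3' : a⁻¹ * (a - 1) - 1 = -a⁻¹ := by
      field_simp
      ring
    rw [h3']
    have h4 : (-a⁻¹ : ZMod p) ≠ 0 := by simp [inv_ne_zero ha0]
    rw [pow_sub_two_inv hp _ h4]
    rw [inv_neg, inv_inv, neg_neg]
end

section
/- Let p be an odd prime and let a, b ∈ ℤ/pℤ with a ≠ b. The polynomial g(x) = (b-a)·(y^{p-2} + y^{p-3} + ... + y^3 + y^2 + 2y + 1) + a, where y denotes (x-a)/(b-a) (i.e., y = (b-a)^{-1}(x-a)), represents the transposition (a b) on ℤ/pℤ; that is, g(a) = b, g(b) = a, and g(c) = c for every c ∈ ℤ/pℤ with c ≠ a and c ≠ b. -/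
/-!
Over a finite field `K` with `q` elements, `t ^ (q - 1) = 1` for every `t ≠ 0`, so the
geometric sum `∑_{i < q-1} t ^ i` vanishes unless `t ∈ {0, 1}`, where it equals `1` and
`q - 1 = -1`. Hence `t ↦ ∑_{i < q-1} t ^ i + t` is the transposition `(0 1)`, and the
polynomial of the theorem is its conjugate by the affine map `y ↦ (b - a) y + a`, which sends
`0, 1` to `a, b`.
-/

open Polynomial Finset

section FiniteField

variable {K : Type*} [Field K] [Fintype K]

theorem geom_sum_card_sub_one_eq_zero {t : K} (h0 : t ≠ 0) (h1 : t ≠ 1) :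
    ∑ i ∈ range (Fintype.card K - 1), t ^ i = 0 := by
  rw [geom_sum_eq h1, FiniteField.pow_card_sub_one_eq_one t h0, sub_self, zero_div]

theorem geom_sum_card_sub_one_add_self [DecidableEq K] (t : K) :
    ∑ i ∈ range (Fintype.card K - 1), t ^ i + t = Equiv.swap 0 1 t := by
  have hcard : 1 < Fintype.card K := Fintype.one_lt_card
  rcases eq_or_ne t 0 with rfl | h0
  · rw [Equiv.swap_apply_left, add_zero,
      sum_eq_single_of_mem 0 (mem_range.2 (by omega)) fun i _ hi => zero_pow hi, pow_zero]
  rcases eq_or_ne t 1 with rfl | h1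
  · have hq : ((Fintype.card K - 1 : ℕ) : K) = -1 := by
      rw [Nat.cast_sub hcard.le, FiniteField.cast_card_eq_zero, Nat.cast_one, zero_sub]
    simp [hq]
  · rw [geom_sum_card_sub_one_eq_zero h0 h1, zero_add,
      Equiv.swap_apply_of_ne_of_ne h0 h1]

end FiniteField

theorem mul_swap_zero_one_add {K : Type*} [Field K] [DecidableEq K] {a b : K} (hab : a ≠ b)
    (c : K) :
    (b - a) * Equiv.swap 0 1 ((b - a)⁻¹ * (c - a)) + a = Equiv.swap a b c := by
  have hd : b - a ≠ 0 := sub_ne_zero.mpr hab.symm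
  have hy : ∀ x, (b - a)⁻¹ * (c - a) = x ↔ c = (b - a) * x + a := fun x => by
    rw [inv_mul_eq_iff_eq_mul₀ hd, sub_eq_iff_eq_add]
  simp only [Equiv.swap_apply_def, hy, mul_zero, zero_add, mul_one, sub_add_cancel]
  split_ifs <;> field_simp <;> ring

theorem stmt_2_general (p : ℕ) (hp : p.Prime) (a b : ZMod p) (hab : a ≠ b)
    (y g : Polynomial (ZMod p))
    (hy : y = C (b - a)⁻¹ * ((X : Polynomial (ZMod p)) - C a))
    (hg : g = C (b - a) * ((∑ i ∈ Finset.range (p - 1), y ^ i) + y) + C a) :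
    g.eval a = b ∧ g.eval b = a ∧ ∀ c : ZMod p, c ≠ a → c ≠ b → g.eval c = c := by
  have := Fact.mk hp
  have hswap : ∀ c, g.eval c = Equiv.swap a b c := fun c => by
    rw [← mul_swap_zero_one_add hab, ← geom_sum_card_sub_one_add_self, ZMod.card]
    simp [hg, hy, eval_finsetSum]
  refine ⟨?_, ?_, fun c hca hcb => ?_⟩
  · rw [hswap, Equiv.swap_apply_left]
  · rw [hswap, Equiv.swap_apply_right]
  · rw [hswap, Equiv.swap_apply_of_ne_of_ne hca hcb]

/-- For an odd prime `p` and distinct `a b : ℤ/pℤ`, the polynomial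
`g(x) = (b-a)·((∑_{i=0}^{p-2} y^i) + y) + a` with `y = (b-a)⁻¹·(x-a)`
represents the transposition `(a b)` on `ℤ/pℤ`. -/
theorem stmt_2 (p : ℕ) (hp : p.Prime) (hodd : Odd p) (a b : ZMod p) (hab : a ≠ b)
    (y g : Polynomial (ZMod p))
    (hy : y = C (b - a)⁻¹ * ((X : Polynomial (ZMod p)) - C a))
    (hg : g = C (b - a) * ((∑ i ∈ Finset.range (p - 1), y ^ i) + y) + C a) :
    g.eval a = b ∧ g.eval b = a ∧ ∀ c : ZMod p, c ≠ a → c ≠ b → g.eval c = c :=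
  stmt_2_general p hp a b hab y g hy hg
end

section
/- Let p be a prime, let f : ℤ/pℤ → ℤ/pℤ be a function, let 0 ≤ k ≤ p-1, and let P ∈ (ℤ/pℤ)[x] be a polynomial of degree at most p-1 with P(c) = f(c) for all c ∈ ℤ/pℤ. Then P has degree exactly p-1-k if and only if Σ_{a ∈ ℤ/pℤ} a^j · f(a) = 0 in ℤ/pℤ for all 0 ≤ j ≤ k-1 and Σ_{a ∈ ℤ/pℤ} a^k · f(a) ≠ 0 in ℤ/pℤ. -/
open Polynomial

open Finset in
lemma aux_sum_pow (p : ℕ) (hp : p.Prime) [NeZero p] (n : ℕ) :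
    ∑ a : ZMod p, a ^ n = if n ≠ 0 ∧ (p - 1) ∣ n then -1 else 0 := by
  haveI : Fact p.Prime := ⟨hp⟩
  by_cases hn : n = 0
  · subst hn
    simp [Finset.card_univ, ZMod.natCast_self]
  · have key : ∑ a : ZMod p, a ^ n = ∑ x : (ZMod p)ˣ, (x ^ n : ZMod p) := by
      classical
      let φ : (ZMod p)ˣ ↪ ZMod p := ⟨fun x ↦ x, Units.val_injective⟩
      have huniv : univ.map φ = univ \ {0} := by
        ext x
        simpa only [mem_map, mem_univ, Function.Embedding.coeFn_mk, true_and, mem_sdiff,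
          mem_singleton, φ] using (show (∃ a : (ZMod p)ˣ, (a : ZMod p) = x) ↔ ¬x = 0 from isUnit_iff_ne_zero)
      calc
        ∑ a : ZMod p, a ^ n = ∑ a ∈ univ \ {(0 : ZMod p)}, a ^ n := by
          rw [← sum_sdiff ({0} : Finset (ZMod p)).subset_univ, sum_singleton, zero_pow hn,
            add_zero]
        _ = ∑ x : (ZMod p)ˣ, (x ^ n : ZMod p) := by simp [φ, ← huniv, univ.sum_map φ]
    rw [key]
    have := FiniteField.sum_pow_units (ZMod p) n
    rw [ZMod.card] at this
    rw [this]
    simp [hn]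

open Finset in
lemma aux_S (p : ℕ) (hp : p.Prime) [NeZero p] (P : Polynomial (ZMod p))
    (hdeg : P.degree ≤ (p - 1 : ℕ)) (j : ℕ) (hj : j < p - 1) :
    ∑ a : ZMod p, a ^ j * P.eval a = -P.coeff (p - 1 - j) := by
  have hp2 : 2 ≤ p := hp.two_le
  have hnd : P.natDegree < p := by
    have := Polynomial.natDegree_le_iff_degree_le.mpr hdeg
    omega
  have heval : ∀ a : ZMod p, P.eval a = ∑ i ∈ range p, P.coeff i * a ^ i := fun a =>
    Polynomial.eval_eq_sum_range' hnd a
  calc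
    ∑ a : ZMod p, a ^ j * P.eval a
        = ∑ a : ZMod p, ∑ i ∈ range p, P.coeff i * a ^ (i + j) := by
          refine Finset.sum_congr rfl fun a _ => ?_
          rw [heval a, Finset.mul_sum]
          refine Finset.sum_congr rfl fun i _ => ?_
          ring
    _ = ∑ i ∈ range p, P.coeff i * ∑ a : ZMod p, a ^ (i + j) := by
          rw [Finset.sum_comm]
          exact Finset.sum_congr rfl fun i _ => (Finset.mul_sum _ _ _).symm
    _ = -P.coeff (p - 1 - j) := by
          rw [Finset.sum_eq_single (p - 1 - j)]
          · rw [aux_sum_pow p hp, if_pos ⟨by omega, by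
              have : p - 1 - j + j = p - 1 := by omega
              rw [this]⟩, mul_neg_one]
          · intro i hi hne
            rw [aux_sum_pow p hp, if_neg, mul_zero]
            rintro ⟨h0, m, hm⟩
            rw [Finset.mem_range] at hi
            rcases m with _ | _ | m
            · omega
            · rw [Nat.mul_succ, Nat.mul_zero, Nat.zero_add] at hm; omega
            · rw [Nat.mul_succ, Nat.mul_succ] at hm
              generalize (p - 1) * m = t at hm
              omega
          · intro h
            exact absurd (Finset.mem_range.mpr (by omega)) h

lemma aux_const (p : ℕ) (hp : p.Prime) [NeZero p] (P : Polynomial (ZMod p))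
    (hc : ∀ m, 0 < m → P.coeff m = 0) :
    ∑ a : ZMod p, a ^ (p - 1) * P.eval a = -P.coeff 0 := by
  have hp2 : 2 ≤ p := hp.two_le
  have hP : P = Polynomial.C (P.coeff 0) := by
    ext n
    cases n with
    | zero => simp
    | succ n => simp [hc (n + 1) (Nat.succ_pos n)]
  calc
    ∑ a : ZMod p, a ^ (p - 1) * P.eval a = (∑ a : ZMod p, a ^ (p - 1)) * P.coeff 0 := by
      rw [Finset.sum_mul]
      refine Finset.sum_congr rfl fun a _ => ?_
      conv_lhs => rw [hP]
      simp
    _ = -P.coeff 0 := by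
      rw [aux_sum_pow p hp, if_pos ⟨by omega, dvd_refl _⟩, neg_one_mul]

/-- For a prime `p`, `0 ≤ k ≤ p - 1`, and `P` of degree at most `p - 1` representing
`f : ℤ/pℤ → ℤ/pℤ`, the polynomial `P` has degree exactly `p - 1 - k` if and only if
`∑_a a^j·f(a) = 0` for all `0 ≤ j ≤ k - 1` and `∑_a a^k·f(a) ≠ 0`. -/
theorem stmt_11 (p : ℕ) (hp : p.Prime) [NeZero p] (f : ZMod p → ZMod p) (k : ℕ) (hk : k ≤ p - 1)
    (P : Polynomial (ZMod p)) (hdeg : P.degree ≤ (p - 1 : ℕ))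
    (hrep : ∀ c : ZMod p, P.eval c = f c) :
    P.degree = (p - 1 - k : ℕ) ↔
      ((∀ j < k, ∑ a : ZMod p, a ^ j * f a = 0) ∧ ∑ a : ZMod p, a ^ k * f a ≠ 0) := by
  have hp2 : 2 ≤ p := hp.two_le
  have hS : ∀ j < p - 1, ∑ a : ZMod p, a ^ j * f a = -P.coeff (p - 1 - j) := by
    intro j hj
    rw [← aux_S p hp P hdeg j hj]
    exact Finset.sum_congr rfl fun a _ => by rw [hrep a]
  constructor
  · intro hdegk
    have hcne : P.coeff (p - 1 - k) ≠ 0 := Polynomial.coeff_ne_zero_of_eq_degree hdegk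
    have hhigh : ∀ m, p - 1 - k < m → P.coeff m = 0 := fun m hm =>
      Polynomial.coeff_eq_zero_of_degree_lt (hdegk ▸ (by exact_mod_cast hm))
    refine ⟨fun j hj => ?_, ?_⟩
    · rw [hS j (lt_of_lt_of_le hj hk), hhigh _ (by omega), neg_zero]
    · by_cases hkp : k < p - 1
      · rw [hS k hkp]
        simpa using hcne
      · have hk' : k = p - 1 := le_antisymm hk (not_lt.mp hkp)
        subst hk'
        rw [show (∑ a : ZMod p, a ^ (p - 1) * f a) = ∑ a : ZMod p, a ^ (p - 1) * P.eval a from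
          Finset.sum_congr rfl fun a _ => by rw [hrep a]]
        rw [aux_const p hp P fun m hm => hhigh m (by omega)]
        simpa [Nat.sub_self] using hcne
  · rintro ⟨h0, hne⟩
    have hzero : ∀ m, p - 1 - k < m → P.coeff m = 0 := by
      intro m hm
      by_cases hmp : m ≤ p - 1
      · have hj : p - 1 - m < k := by omega
        have hj' : p - 1 - m < p - 1 := by omega
        have h := h0 _ hj
        rw [hS _ hj', show p - 1 - (p - 1 - m) = m by omega] at h
        exact neg_eq_zero.mp h
      · exact Polynomial.coeff_eq_zero_of_degree_lt
          (lt_of_le_of_lt hdeg (by exact_mod_cast Nat.lt_of_not_le (by omega)))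
    have hdegle : P.degree ≤ (p - 1 - k : ℕ) := by
      rw [Polynomial.degree_le_iff_coeff_zero]
      intro m hm
      exact hzero m (by exact_mod_cast hm)
    have hne' : P.coeff (p - 1 - k) ≠ 0 := by
      by_cases hkp : k < p - 1
      · rw [hS k hkp] at hne
        exact fun h => hne (by rw [h, neg_zero])
      · have hk' : k = p - 1 := le_antisymm hk (not_lt.mp hkp)
        subst hk'
        rw [show (∑ a : ZMod p, a ^ (p - 1) * f a) = ∑ a : ZMod p, a ^ (p - 1) * P.eval a from
          Finset.sum_congr rfl fun a _ => by rw [hrep a]] at hne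
        rw [aux_const p hp P fun m hm => hzero m (by omega)] at hne
        rw [Nat.sub_self]
        exact fun h => hne (by rw [h, neg_zero])
    exact le_antisymm hdegle (Polynomial.le_degree_of_ne_zero hne')
end

section
/- Let p be an odd prime and let a, b ∈ ℤ/pℤ with a ≠ b. Let Q ∈ (ℤ/pℤ)[x] be the polynomial with (x - a)·(x - b)·Q = x^p - x, and define g(x) = (b-a)^2·Q(x) + x. Then g represents the transposition (a b) on ℤ/pℤ; that is, g(a) = b, g(b) = a, and g(c) = c for every c ∈ ℤ/pℤ with c ≠ a and c ≠ b. -/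
/-!
Differentiating `(X - a)(X - b) Q = X ^ p - X` in characteristic `p` gives `(a - b) Q(a) = -1`,
since the derivative of `X ^ p - X` is `-1`; hence `(b - a)² Q(a) = b - a` and `g(a) = b`, and
symmetrically `g(b) = a`. Every other `c` is a root of `X ^ p - X` but not of `(X - a)(X - b)`,
so `Q(c) = 0` and `g(c) = c`.
-/

open Polynomial

section

variable {R : Type*} [CommRing R]

theorem eval_derivative_X_sub_C_mul_X_sub_C_mul (a b : R) (Q : R[X]) :
    ((X - C a) * (X - C b) * Q).derivative.eval a = (a - b) * Q.eval a := by
  simp only [derivative_mul, derivative_sub, derivative_X, derivative_C, sub_zero, eval_add,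
    eval_mul, eval_sub, eval_X, eval_C, eval_one, sub_self]
  ring

theorem derivative_X_pow_char_sub_X (p : ℕ) [CharP R p] :
    derivative (X ^ p - X : R[X]) = -1 := by
  simp [derivative_X_pow]

theorem sub_mul_eval_eq_neg_one_of_mul_eq_X_pow_char_sub_X (p : ℕ) [CharP R p] {a b : R}
    {Q : R[X]} (hQ : (X - C a) * (X - C b) * Q = X ^ p - X) : (a - b) * Q.eval a = -1 := by
  rw [← eval_derivative_X_sub_C_mul_X_sub_C_mul, hQ, derivative_X_pow_char_sub_X, eval_neg,
    eval_one]

theorem eval_C_sq_sub_mul_add_X_of_mul_eq_X_pow_char_sub_X (p : ℕ) [CharP R p] {a b : R}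
    {Q : R[X]} (hQ : (X - C a) * (X - C b) * Q = X ^ p - X) :
    (C ((b - a) ^ 2) * Q + X).eval a = b := by
  have h := sub_mul_eval_eq_neg_one_of_mul_eq_X_pow_char_sub_X p hQ
  simp only [eval_add, eval_mul, eval_C, eval_X]
  linear_combination (a - b) * h

theorem eval_eq_zero_of_X_sub_C_mul_X_sub_C_mul_eq [IsDomain R] {a b c : R} {Q f : R[X]}
    (hQ : (X - C a) * (X - C b) * Q = f) (hc : f.eval c = 0) (hca : c ≠ a) (hcb : c ≠ b) :
    Q.eval c = 0 := by
  rw [← hQ] at hc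
  simpa [sub_eq_zero, hca, hcb] using hc

end

theorem stmt_15_general (p : ℕ) (hp : p.Prime) (a b : ZMod p)
    (Q g : Polynomial (ZMod p))
    (hQ : ((X : Polynomial (ZMod p)) - C a) * (X - C b) * Q = X ^ p - X)
    (hg : g = C ((b - a) ^ 2) * Q + X) :
    g.eval a = b ∧ g.eval b = a ∧ ∀ c : ZMod p, c ≠ a → c ≠ b → g.eval c = c := by
  have : Fact p.Prime := ⟨hp⟩
  have hQ' : (X - C b) * (X - C a) * Q = X ^ p - X := by rwa [mul_comm (X - C b)]
  subst hg
  refine ⟨eval_C_sq_sub_mul_add_X_of_mul_eq_X_pow_char_sub_X p hQ, ?_, fun c hca hcb => ?_⟩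
  · rw [← neg_sub a b, neg_sq]
    exact eval_C_sq_sub_mul_add_X_of_mul_eq_X_pow_char_sub_X p hQ'
  · have hQc : Q.eval c = 0 :=
      eval_eq_zero_of_X_sub_C_mul_X_sub_C_mul_eq hQ (by simp [ZMod.pow_card]) hca hcb
    simp [hQc]

/-- For an odd prime `p` and distinct `a b : ℤ/pℤ`, if `Q` is the quotient of `x^p - x`
by `(x - a)(x - b)`, then `g(x) = (b-a)²·Q(x) + x` represents the transposition `(a b)`
on `ℤ/pℤ`. -/
theorem stmt_15 (p : ℕ) (hp : p.Prime) (hodd : Odd p) (a b : ZMod p) (hab : a ≠ b)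
    (Q g : Polynomial (ZMod p))
    (hQ : ((X : Polynomial (ZMod p)) - C a) * (X - C b) * Q = X ^ p - X)
    (hg : g = C ((b - a) ^ 2) * Q + X) :
    g.eval a = b ∧ g.eval b = a ∧ ∀ c : ZMod p, c ≠ a → c ≠ b → g.eval c = c :=
  stmt_15_general p hp a b Q g hQ hg
end

section
/- Let p be an odd prime and let a, b ∈ ℤ/pℤ with a ≠ b. Let Q ∈ (ℤ/pℤ)[x] be the polynomial with (x - a)·(x - b)·Q = x^p - x. Then in (ℤ/pℤ)[x] one has the polynomial identity (b-a)^2·Q(x) + x = (b-a)·(y^{p-2} + y^{p-3} + ... + y^3 + y^2 + 2y + 1) + a, where y denotes the linear polynomial (b-a)^{-1}·(x - a). -/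
/-! In the variable `y` with `x = d y + a`, `d = b - a`, the factors `x - a` and `x - b` become
`d y` and `d (y - 1)`, while `x^q - x` becomes `d (y^q - y)` because `d^q = d` and the Frobenius
`f ↦ f^q` commutes with substitution. Cancelling `y (y - 1)` turns `d² Q` into the geometric sum
`d (1 + y + ⋯ + y^(q-2))`, and adding `x = d y + a` gives the identity. -/

open Polynomial

open Finset in
theorem pow_sub_self_eq_mul_geom_sum {R : Type*} [CommRing R] (y : R) {n : ℕ} (hn : n ≠ 0) :
    y ^ n - y = y * (y - 1) * ∑ i ∈ range (n - 1), y ^ i := by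
  obtain ⟨m, rfl⟩ := Nat.exists_eq_succ_of_ne_zero hn
  rw [Nat.succ_sub_one, mul_assoc, mul_geom_sum, pow_succ']
  ring

namespace Polynomial

section FiniteField

variable {K : Type*} [Field K] [Fintype K]

theorem comp_pow_card (f y : K[X]) : f.comp y ^ Fintype.card K = f.comp (y ^ Fintype.card K) := by
  rw [← pow_comp, ← FiniteField.expand_card, expand_eq_comp_X_pow, comp_assoc, X_pow_comp]

theorem C_sq_mul_eq_C_mul_geom_sum {a b : K} {Q y : K[X]}
    (hQ : (X - C a) * (X - C b) * Q = X ^ Fintype.card K - X)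
    (hy : X - C a = C (b - a) * y) :
    C ((b - a) ^ 2) * Q = C (b - a) * ∑ i ∈ Finset.range (Fintype.card K - 1), y ^ i := by
  set d := b - a
  have hXb : X - C b = C d * (y - 1) := by
    rw [mul_sub, ← hy, mul_one, show C d = C b - C a from C_sub]
    ring
  have hX : X = (C d * X + C a).comp y := by
    simp only [add_comp, mul_comp, C_comp, X_comp, ← hy, sub_add_cancel]
  have hXq : X ^ Fintype.card K - X = C d * (y ^ Fintype.card K - y) :=
    calc X ^ Fintype.card K - X
        = (C d * X + C a).comp y ^ Fintype.card K - (C d * X + C a).comp y := by rw [← hX]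
      _ = (C d * X + C a).comp (y ^ Fintype.card K) - (C d * X + C a).comp y := by
        rw [comp_pow_card]
      _ = C d * (y ^ Fintype.card K - y) := by
        simp only [add_comp, mul_comp, C_comp, X_comp]
        ring
  have hy0 : y ≠ 0 := by
    rintro rfl
    exact X_sub_C_ne_zero a (by rw [hy, mul_zero])
  have hy1 : y - 1 ≠ 0 := by
    intro h
    exact X_sub_C_ne_zero b (by rw [hXb, h, mul_zero])
  apply mul_right_cancel₀ (mul_ne_zero hy0 hy1)
  calc C (d ^ 2) * Q * (y * (y - 1)) = (X - C a) * (X - C b) * Q := by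
        rw [hy, hXb, C_pow]; ring
    _ = C d * (y * (y - 1) * ∑ i ∈ Finset.range (Fintype.card K - 1), y ^ i) := by
        rw [hQ, hXq, pow_sub_self_eq_mul_geom_sum y Fintype.card_ne_zero]
    _ = _ := by ring

end FiniteField

end Polynomial

theorem stmt_16_general (p : ℕ) (hp : p.Prime) (a b : ZMod p) (hab : a ≠ b)
    (Q y : Polynomial (ZMod p))
    (hQ : ((X : Polynomial (ZMod p)) - C a) * (X - C b) * Q = X ^ p - X)
    (hy : y = C (b - a)⁻¹ * ((X : Polynomial (ZMod p)) - C a)) :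
    C ((b - a) ^ 2) * Q + X =
      C (b - a) * ((∑ i ∈ Finset.range (p - 1), y ^ i) + y) + C a := by
  have : Fact p.Prime := ⟨hp⟩
  have hXa : X - C a = C (b - a) * y := by
    rw [hy, ← mul_assoc, ← C_mul, mul_inv_cancel₀ (sub_ne_zero.mpr hab.symm), C_1, one_mul]
  have hE := C_sq_mul_eq_C_mul_geom_sum (hQ.trans (by rw [ZMod.card])) hXa
  rw [ZMod.card] at hE
  rw [hE]
  linear_combination hXa

/-- For an odd prime `p` and distinct `a b : ℤ/pℤ`, with `Q` the quotient of `x^p - x`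
by `(x - a)(x - b)`, one has the polynomial identity
`(b-a)²·Q + x = (b-a)·((∑_{i=0}^{p-2} y^i) + y) + a`, where `y = (b-a)⁻¹·(x - a)`. -/
theorem stmt_16 (p : ℕ) (hp : p.Prime) (hodd : Odd p) (a b : ZMod p) (hab : a ≠ b)
    (Q y : Polynomial (ZMod p))
    (hQ : ((X : Polynomial (ZMod p)) - C a) * (X - C b) * Q = X ^ p - X)
    (hy : y = C (b - a)⁻¹ * ((X : Polynomial (ZMod p)) - C a)) :
    C ((b - a) ^ 2) * Q + X =
      C (b - a) * ((∑ i ∈ Finset.range (p - 1), y ^ i) + y) + C a :=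
  stmt_16_general p hp a b hab Q y hQ hy
end
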